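/- Let Σ = Diag(σ_1,…,σ_N) with σ_i > 0 and w > 0. The maximum of w·log det(I + Σ Q̃ Σ) − Tr(Q̃) over positive semidefinite N×N matrices Q̃ is attained at the diagonal matrix Λ = Diag(λ_1,…,λ_N) with λ_i = max(0, w − 1/σ_i²), and the maximum value equals Σ_i [w·log(1 + σ_i² λ_i) − λ_i]. -/

import Mathlib

/-!
Hadamard's inequality bounds `log det (I + Σ Q Σ)` by `∑ᵢ log (1 + σᵢ² Qᵢᵢ)`, and `Tr Q = ∑ᵢ Qᵢᵢ`,
so the objective at `Q` is at most a sum of scalar objectives in the diagonal entries `Qᵢᵢ ≥ 0`.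
Each scalar problem is a concave maximisation solved by `λᵢ`, and `Λ` attains all of them at once
because `I + Σ Λ Σ` is diagonal.
-/

open Matrix ComplexOrder

namespace Matrix

variable {n 𝕜 : Type*} [Fintype n] [DecidableEq n] [RCLike 𝕜] {A : Matrix n n 𝕜}

lemma PosSemidef.diagonal_ofReal_mul_mul_diagonal_ofReal (hA : A.PosSemidef) (d : n → ℝ) :
    (diagonal (fun i => (d i : 𝕜)) * A * diagonal fun i => (d i : 𝕜)).PosSemidef := by
  have hD : (diagonal fun i => (d i : 𝕜)).IsHermitian :=
    isHermitian_diagonal_iff.mpr fun i => by simp [IsSelfAdjoint]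
  simpa [hD.eq] using hA.conjTranspose_mul_mul_same (diagonal fun i => (d i : 𝕜))

/-- Each eigenvalue `μ ≥ 0` satisfies `μ ≤ exp (μ - 1)`. -/
lemma PosSemidef.re_det_le_exp_re_trace_sub_card (hA : A.PosSemidef) :
    RCLike.re A.det ≤ Real.exp (RCLike.re A.trace - Fintype.card n) := by
  have hH := hA.isHermitian
  have hsum : ∑ i, (hH.eigenvalues i - 1) = ∑ i, hH.eigenvalues i - Fintype.card n := by
    simp [Finset.sum_sub_distrib]
  rw [hH.det_eq_prod_eigenvalues, hH.trace_eq_sum_eigenvalues, ← RCLike.ofReal_prod,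
    ← RCLike.ofReal_sum, RCLike.ofReal_re, RCLike.ofReal_re, ← hsum, Real.exp_sum]
  refine Finset.prod_le_prod (fun i _ => hA.eigenvalues_nonneg i) fun i _ => ?_
  linarith [Real.add_one_le_exp (hH.eigenvalues i - 1)]

/-- Hadamard's inequality. Rescaling `A` to unit diagonal makes its trace `card n`, so the
rescaled determinant is at most `exp 0 = 1`. -/
lemma PosDef.re_det_le_prod_re_diag (hA : A.PosDef) :
    RCLike.re A.det ≤ ∏ i, RCLike.re (A i i) := by
  set a : n → ℝ := fun i => RCLike.re (A i i)
  have ha : ∀ i, 0 < a i := fun i => (RCLike.pos_iff.mp hA.diag_pos).1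
  set d : n → ℝ := fun i => (√(a i))⁻¹
  have hd : ∀ i, d i ^ 2 * a i = 1 := fun i => by
    simp only [d, inv_pow, Real.sq_sqrt (ha i).le, inv_mul_cancel₀ (ha i).ne']
  set D : Matrix n n 𝕜 := diagonal fun i => (d i : 𝕜)
  have hBdiag : ∀ i, (D * A * D) i i = ((d i ^ 2 : ℝ) : 𝕜) * A i i := fun i => by
    simp only [D, mul_diagonal, diagonal_mul]; push_cast; ring
  have hBtrace : RCLike.re (D * A * D).trace = Fintype.card n := by
    simp only [trace, diag_apply, hBdiag, map_sum, RCLike.re_ofReal_mul]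
    simp [a, hd]
  have hBdet : RCLike.re (D * A * D).det = (∏ i, a i)⁻¹ * RCLike.re A.det := by
    have hprod : (∏ i, d i) * ∏ i, d i = (∏ i, a i)⁻¹ := by
      rw [← Finset.prod_mul_distrib, ← Finset.prod_inv_distrib]
      exact Finset.prod_congr rfl fun i _ => by rw [← sq]; exact eq_inv_of_mul_eq_one_left (hd i)
    rw [det_mul, det_mul, det_diagonal, ← RCLike.ofReal_prod, mul_right_comm, ← RCLike.ofReal_mul,
      hprod, RCLike.re_ofReal_mul]
  have hB :=
    (hA.posSemidef.diagonal_ofReal_mul_mul_diagonal_ofReal d).re_det_le_exp_re_trace_sub_card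
  rwa [hBtrace, sub_self, Real.exp_zero, hBdet,
    inv_mul_le_iff₀ (Finset.prod_pos fun i _ => ha i), mul_one] at hB

lemma PosDef.log_re_det_le_sum_log_re_diag (hA : A.PosDef) :
    Real.log (RCLike.re A.det) ≤ ∑ i, Real.log (RCLike.re (A i i)) := by
  rw [← Real.log_prod fun i _ => (RCLike.pos_iff.mp hA.diag_pos).1.ne']
  exact Real.log_le_log (RCLike.pos_iff.mp hA.det_pos).1 hA.re_det_le_prod_re_diag

end Matrix

/-- On `[0, ∞)`, `q ↦ w log (1 + s q) - q` is concave with slope `w s - 1` at `0`; it is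
maximised at `0` when `w s ≤ 1` and at its critical point `w - 1 / s` otherwise. -/
lemma waterfilling_scalar_le {s w q : ℝ} (hs : 0 < s) (hw : 0 ≤ w) (hq : 0 ≤ q) :
    w * Real.log (1 + s * q) - q ≤
      w * Real.log (1 + s * max 0 (w - 1 / s)) - max 0 (w - 1 / s) := by
  have hlog := Real.log_le_sub_one_of_pos (x := 1 + s * q) (by positivity)
  rcases le_or_gt (w * s) 1 with hws | hws
  · rw [max_eq_left (by rw [sub_nonpos, le_div_iff₀ hs]; exact hws), mul_zero, add_zero,
      Real.log_one, mul_zero, sub_zero]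
    nlinarith [mul_nonneg hw (sub_nonneg.2 hlog), mul_nonneg (sub_nonneg.2 hws) hq]
  · have hlam : 0 ≤ w - 1 / s := by rw [sub_nonneg, div_le_iff₀ hs]; exact hws.le
    have hy : 1 + s * (w - 1 / s) = s * w := by field_simp; ring
    have hw' : 0 < w := by nlinarith
    rw [max_eq_right hlam, hy]
    have hratio := Real.log_le_sub_one_of_pos (x := (1 + s * q) / (s * w)) (by positivity)
    rw [Real.log_div (by positivity) (by positivity)] at hratio
    have hslope : w * ((1 + s * q) / (s * w) - 1) = q - (w - 1 / s) := by field_simp; ring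
    nlinarith [mul_le_mul_of_nonneg_left hratio hw]

/-- Water-filling solves max over PSD Q̃ of w·log det(I + Σ Q̃ Σ) − Tr(Q̃):
the maximum is attained at Λ with λᵢ = max(0, w − 1/σᵢ²). -/
theorem waterfilling_matrix_max
    {N : ℕ} (σ : Fin N → ℝ) (hσ : ∀ i, 0 < σ i) (w : ℝ) (hw : 0 < w) :
    let Sd : Matrix (Fin N) (Fin N) ℂ := Matrix.diagonal (fun i => (σ i : ℂ))
    let lam : Fin N → ℝ := fun i => max 0 (w - 1 / (σ i) ^ 2)
    let Lam : Matrix (Fin N) (Fin N) ℂ := Matrix.diagonal (fun i => (lam i : ℂ))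
    let val : ℝ := ∑ i, (w * Real.log (1 + (σ i) ^ 2 * lam i) - lam i)
    (w * Real.log ((1 + Sd * Lam * Sd).det).re - (Lam.trace).re = val) ∧
    (∀ Q : Matrix (Fin N) (Fin N) ℂ, Q.PosSemidef →
      w * Real.log ((1 + Sd * Q * Sd).det).re - (Q.trace).re ≤ val) := by
  intro Sd lam Lam val
  have hdiag (Q : Matrix (Fin N) (Fin N) ℂ) (i : Fin N) :
      ((1 + Sd * Q * Sd) i i).re = 1 + σ i ^ 2 * (Q i i).re := by
    have hSQS : (Sd * Q * Sd) i i = ((σ i ^ 2 : ℝ) : ℂ) * Q i i := by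
      simp only [Sd, mul_diagonal, diagonal_mul]; push_cast; ring
    rw [Matrix.add_apply, one_apply_eq, hSQS, Complex.add_re, Complex.one_re, Complex.re_ofReal_mul]
  constructor
  · have hLam : 1 + Sd * Lam * Sd = diagonal fun i => ((1 + σ i ^ 2 * lam i : ℝ) : ℂ) := by
      rw [diagonal_mul_diagonal, diagonal_mul_diagonal, ← diagonal_one, diagonal_add]
      congr 1 with i
      push_cast; ring
    have hpos (i : Fin N) : 0 < 1 + σ i ^ 2 * lam i := by
      have : 0 ≤ lam i := le_max_left _ _
      positivity
    rw [hLam, det_diagonal, ← Complex.ofReal_prod, Complex.ofReal_re,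
      Real.log_prod fun i _ => (hpos i).ne', trace_diagonal, ← Complex.ofReal_sum,
      Complex.ofReal_re, Finset.mul_sum, ← Finset.sum_sub_distrib]
  · intro Q hQ
    have hX : (1 + Sd * Q * Sd).PosDef :=
      PosDef.one.add_posSemidef (hQ.diagonal_ofReal_mul_mul_diagonal_ofReal σ)
    calc w * Real.log ((1 + Sd * Q * Sd).det).re - Q.trace.re
        ≤ ∑ i, (w * Real.log (1 + σ i ^ 2 * (Q i i).re) - (Q i i).re) := by
          have hhadamard := mul_le_mul_of_nonneg_left hX.log_re_det_le_sum_log_re_diag hw.le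
          simp only [RCLike.re_to_complex, hdiag] at hhadamard
          rw [Finset.sum_sub_distrib, ← Finset.mul_sum, trace, Complex.re_sum]
          exact sub_le_sub_right hhadamard _
      _ ≤ val := Finset.sum_le_sum fun i _ =>
          waterfilling_scalar_le (pow_pos (hσ i) 2) hw.le
            (RCLike.nonneg_iff.mp hQ.diag_nonneg).1
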